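/- Let δ = δ_0 + uδ_1 + ⋯ + u^{t−1}δ_{t−1} ∈ R^t be a unit such that x^n − δ_{0,0} is an irreducible polynomial over F. Then R^{t,n}_δ is a local ring whose unique maximal ideal is generated by u and x^n − δ_{0,0}; equivalently, an element of R^{t,n}_δ is a unit if and only if it does not belong to the ideal ⟨u, x^n − δ_{0,0}⟩. -/

import Mathlib

open Polynomial

/-- The finite chain ring `R^t = 𝔽_{p^m}[u]/⟨u^t⟩`. -/
abbrev Rt (p m t : ℕ) [Fact p.Prime] : Type _ :=
  Polynomial (GaloisField p m) ⧸ Ideal.span {(X : Polynomial (GaloisField p m)) ^ t}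

noncomputable instance (p m t : ℕ) [Fact p.Prime] : CommRing (Rt p m t) :=
  Ideal.Quotient.commRing _

/-- The canonical projection `𝔽_{p^m}[u] → R^t`. -/
noncomputable def mkRt (p m t : ℕ) [Fact p.Prime] :
    Polynomial (GaloisField p m) →+* Rt p m t :=
  Ideal.Quotient.mk _

/-- The element `u ∈ R^t`. -/
noncomputable def uRt (p m t : ℕ) [Fact p.Prime] : Rt p m t := mkRt p m t X

/-- The canonical embedding `𝔽_{p^m} → R^t`. -/
noncomputable def κ (p m t : ℕ) [Fact p.Prime] : GaloisField p m →+* Rt p m t :=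
  (mkRt p m t).comp (C : GaloisField p m →+* Polynomial (GaloisField p m))

/-- The quotient ring `R^t[x]/⟨x^N − δ⟩`. -/
abbrev Qr (p m t : ℕ) [Fact p.Prime] (N : ℕ) (δ : Rt p m t) : Type _ :=
  Polynomial (Rt p m t) ⧸ Ideal.span {(X : Polynomial (Rt p m t)) ^ N - C δ}

/-- The canonical projection `R^t[x] → R^t[x]/⟨x^N − δ⟩`. -/
noncomputable def mkQr (p m t : ℕ) [Fact p.Prime] (N : ℕ) (δ : Rt p m t) :
    Polynomial (Rt p m t) →+* Qr p m t N δ :=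
  Ideal.Quotient.mk _

/-!
Reduction modulo `u` sends `R^t[x]/⟨x^{np^s} − δ⟩` onto `𝔽[x]/⟨xⁿ − δ_{0,0}⟩`, a field since
`xⁿ − δ_{0,0}` is irreducible; its kernel is `⟨u, xⁿ − δ_{0,0}⟩`. That kernel is nil: `u` is
nilpotent, and `(xⁿ − δ_{0,0})^{p^s} = x^{np^s} − δ_0 ≡ δ − δ_0 ∈ uR^t` by the Frobenius.
A maximal ideal made of nilpotents is contained in every maximal ideal, so it is the only one.
-/

theorem IsLocalRing.of_isMaximal_of_le_nilradical {R : Type*} [CommRing R] {I : Ideal R}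
    (hI : I.IsMaximal) (hnil : I ≤ nilradical R) : IsLocalRing R :=
  of_unique_max_ideal ⟨I, hI, fun _ hJ ↦
    (hI.eq_of_le hJ.ne_top (hnil.trans (nilradical_le_prime _))).symm⟩

section TruncatedPolynomial

variable {R : Type*} [CommRing R] {t : ℕ}

noncomputable def truncConstCoeff (ht : 0 < t) : R[X] ⧸ Ideal.span {(X : R[X]) ^ t} →+* R :=
  Ideal.Quotient.lift _ (evalRingHom 0) fun a ha ↦ by
    obtain ⟨b, rfl⟩ := Ideal.mem_span_singleton'.mp ha
    simp [ht.ne']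

theorem ker_truncConstCoeff (ht : 0 < t) :
    RingHom.ker (truncConstCoeff (R := R) ht) =
      Ideal.span {Ideal.Quotient.mk (Ideal.span {(X : R[X]) ^ t}) X} := by
  refine (Ideal.ker_quotient_lift _ _).trans ?_
  rw [ker_evalRingHom, map_zero, sub_zero, Ideal.map_span, Set.image_singleton]

theorem isNilpotent_mk_X : IsNilpotent (Ideal.Quotient.mk (Ideal.span {(X : R[X]) ^ t}) X) :=
  ⟨t, by rw [← map_pow, Ideal.Quotient.eq_zero_iff_mem]; exact Ideal.mem_span_singleton_self _⟩

end TruncatedPolynomial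

section ResidueMap

variable {A K : Type*} [CommRing A] [CommRing K] (ε : A →+* K) {N : ℕ} {δ : A} {f : K[X]}

noncomputable def residueMap (hf : f ∣ X ^ N - C (ε δ)) :
    A[X] ⧸ Ideal.span {X ^ N - C δ} →+* K[X] ⧸ Ideal.span {f} :=
  Ideal.Quotient.lift _ ((Ideal.Quotient.mk _).comp (mapRingHom ε)) fun a ha ↦ by
    obtain ⟨b, rfl⟩ := Ideal.mem_span_singleton'.mp ha
    change Ideal.Quotient.mk _ ((b * (X ^ N - C δ)).map ε) = 0
    rw [Ideal.Quotient.eq_zero_iff_mem, Ideal.mem_span_singleton, Polynomial.map_mul,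
      Polynomial.map_sub, Polynomial.map_pow, map_X, map_C]
    exact hf.mul_left _

theorem residueMap_mk (hf : f ∣ X ^ N - C (ε δ)) (F : A[X]) :
    residueMap ε hf (Ideal.Quotient.mk _ F) = Ideal.Quotient.mk _ (F.map ε) :=
  rfl

theorem residueMap_surjective (hε : Function.Surjective ε) (hf : f ∣ X ^ N - C (ε δ)) :
    Function.Surjective (residueMap ε hf) :=
  (Ideal.Quotient.mk_surjective.comp (map_surjective ε hε)).forall.mpr fun F ↦
    ⟨Ideal.Quotient.mk _ F, rfl⟩

variable {ε} {κ : K →+* A} {u : A}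

theorem ker_residueMap (hεκ : ε.comp κ = RingHom.id K) (hker : RingHom.ker ε = Ideal.span {u})
    (hf : f ∣ X ^ N - C (ε δ)) :
    RingHom.ker (residueMap ε hf) =
      Ideal.span {Ideal.Quotient.mk _ (C u), Ideal.Quotient.mk _ (f.map κ)} := by
  have hu : ε u = 0 := RingHom.mem_ker.mp (hker ▸ Ideal.mem_span_singleton_self u)
  apply le_antisymm
  · intro c hc
    obtain ⟨F, rfl⟩ := Ideal.Quotient.mk_surjective c
    rw [RingHom.mem_ker, residueMap_mk, Ideal.Quotient.eq_zero_iff_mem,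
      Ideal.mem_span_singleton] at hc
    obtain ⟨g, hg⟩ := hc
    -- every coefficient of `F` agrees with its reduction mod `u`, lifted back by `κ`, up to `uA`
    obtain ⟨h, hh⟩ : C u ∣ F - (F.map ε).map κ := by
      refine (C_dvd_iff_dvd_coeff _ _).mpr fun i ↦ Ideal.mem_span_singleton.mp ?_
      rw [← hker, RingHom.mem_ker, coeff_sub, coeff_map, coeff_map, map_sub,
        ← RingHom.comp_apply ε κ, hεκ, RingHom.id_apply, sub_self]
    have hF : F = C u * h + f.map κ * g.map κ := by
      rw [← hh, hg, Polynomial.map_mul]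
      ring
    rw [hF, map_add, map_mul, map_mul]
    exact Ideal.add_mem _ (Ideal.mul_mem_right _ _ (Ideal.subset_span (by simp)))
      (Ideal.mul_mem_right _ _ (Ideal.subset_span (by simp)))
  · rw [Ideal.span_le, Set.insert_subset_iff, Set.singleton_subset_iff]
    refine ⟨?_, ?_⟩ <;>
      simp only [SetLike.mem_coe, RingHom.mem_ker, residueMap_mk, Ideal.Quotient.eq_zero_iff_mem]
    · simp [hu]
    · rw [Polynomial.map_map, hεκ, Polynomial.map_id]
      exact Ideal.mem_span_singleton_self f

theorem ker_residueMap_le_nilradical (hεκ : ε.comp κ = RingHom.id K)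
    (hker : RingHom.ker ε = Ideal.span {u}) (hu : IsNilpotent u) {q : ℕ}
    (hfq : f ^ q = X ^ N - C (ε δ)) (hf : f ∣ X ^ N - C (ε δ)) :
    RingHom.ker (residueMap ε hf) ≤ nilradical _ := by
  have hkerNil : RingHom.ker ε ≤ nilradical A := by
    rw [hker, Ideal.span_singleton_le_iff_mem]
    exact hu
  have hδ : δ - κ (ε δ) ∈ RingHom.ker ε := by
    rw [RingHom.mem_ker, map_sub, ← RingHom.comp_apply ε κ, hεκ, RingHom.id_apply, sub_self]
  have hXδ : Ideal.Quotient.mk (Ideal.span {X ^ N - C δ}) (X ^ N - C δ) = 0 :=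
    Ideal.Quotient.eq_zero_iff_mem.mpr (Ideal.mem_span_singleton_self _)
  rw [ker_residueMap hεκ hker, Ideal.span_le, Set.insert_subset_iff, Set.singleton_subset_iff]
  refine ⟨(hu.map C).map _, IsNilpotent.of_pow (m := q) ?_⟩
  -- `f^q` lifts to `x^N − κ(ε δ)`, which differs from `x^N − δ` by a constant in `uA`
  have hlift : Ideal.Quotient.mk _ (f.map κ) ^ q =
      Ideal.Quotient.mk (Ideal.span {X ^ N - C δ}) (C (δ - κ (ε δ))) := by
    rw [← map_pow, ← Polynomial.map_pow, hfq, Polynomial.map_sub, Polynomial.map_pow, map_X,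
      map_C, show (X ^ N - C (κ (ε δ)) : A[X]) = (X ^ N - C δ) + C (δ - κ (ε δ)) by
        rw [map_sub]; ring, map_add, hXδ, zero_add]
  rw [hlift]
  exact ((mem_nilradical.mp (hkerNil hδ)).map C).map _

end ResidueMap

theorem stmt_13 (p m s t n : ℕ) [Fact p.Prime] (ht : 1 ≤ t)
    (δc : ℕ → GaloisField p m)
    (δ00 : GaloisField p m) (hδ00 : δ00 ^ p ^ s = δc 0)
    (hirr : Irreducible ((X : Polynomial (GaloisField p m)) ^ n - C δ00)) :
    ∃ hloc : IsLocalRing (Qr p m t (n * p ^ s)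
        (mkRt p m t (∑ i ∈ Finset.range t, C (δc i) * X ^ i))),
      IsLocalRing.maximalIdeal (Qr p m t (n * p ^ s)
          (mkRt p m t (∑ i ∈ Finset.range t, C (δc i) * X ^ i))) =
        Ideal.span {mkQr p m t (n * p ^ s)
            (mkRt p m t (∑ i ∈ Finset.range t, C (δc i) * X ^ i))
            (C (uRt p m t)),
          mkQr p m t (n * p ^ s)
            (mkRt p m t (∑ i ∈ Finset.range t, C (δc i) * X ^ i))
            (X ^ n - C (κ p m t δ00))} ∧
      ∀ c : Qr p m t (n * p ^ s)
          (mkRt p m t (∑ i ∈ Finset.range t, C (δc i) * X ^ i)),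
        IsUnit c ↔ c ∉ Ideal.span {mkQr p m t (n * p ^ s)
            (mkRt p m t (∑ i ∈ Finset.range t, C (δc i) * X ^ i))
            (C (uRt p m t)),
          mkQr p m t (n * p ^ s)
            (mkRt p m t (∑ i ∈ Finset.range t, C (δc i) * X ^ i))
            (X ^ n - C (κ p m t δ00))} := by
  set ε := truncConstCoeff (R := GaloisField p m) ht
  set δ := mkRt p m t (∑ i ∈ Finset.range t, C (δc i) * X ^ i)
  have hεκ : ε.comp (κ p m t) = RingHom.id _ := RingHom.ext fun a ↦ eval_C
  have hεδ : ε δ = δc 0 := by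
    change (∑ i ∈ Finset.range t, C (δc i) * X ^ i).eval 0 = δc 0
    rw [eval_finsetSum, Finset.sum_eq_single_of_mem 0 (Finset.mem_range.mpr ht)]
    · simp
    · intro i _ hi
      simp [hi]
  have hfq : ((X : Polynomial (GaloisField p m)) ^ n - C δ00) ^ p ^ s =
      X ^ (n * p ^ s) - C (ε δ) := by
    rw [sub_pow_char_pow, ← pow_mul, ← C_pow, hδ00, hεδ]
  have hf := hfq ▸ dvd_pow_self _ (pow_ne_zero s (Fact.out : p.Prime).ne_zero)
  have := PrincipalIdealRing.isMaximal_of_irreducible hirr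
  let := Ideal.Quotient.field (Ideal.span {(X : (GaloisField p m)[X]) ^ n - C δ00})
  have hmax := RingHom.ker_isMaximal_of_surjective _ (residueMap_surjective ε
    (fun a ↦ ⟨κ p m t a, RingHom.congr_fun hεκ a⟩) hf)
  have hM := ker_residueMap hεκ (ker_truncConstCoeff ht) hf
  simp only [Polynomial.map_sub, Polynomial.map_pow, map_X, map_C] at hM
  have hloc := IsLocalRing.of_isMaximal_of_le_nilradical hmax
    (ker_residueMap_le_nilradical hεκ (ker_truncConstCoeff ht) isNilpotent_mk_X hfq hf)
  have hmaxIdeal := (IsLocalRing.eq_maximalIdeal hmax).symm.trans hM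
  exact ⟨hloc, hmaxIdeal, fun c ↦
    IsLocalRing.notMem_maximalIdeal.symm.trans (iff_of_eq (congrArg (c ∉ ·) hmaxIdeal))⟩
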